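/- arXiv:2305.11154 — 3 statements merged into one kernel-verified Lean document; each statement's English description precedes it below -/
import Mathlib

section
/- Let B : [0,∞) → B(h) be a continuous family of positive self-adjoint operators (B_t ≥ 0 for all t), and for fixed s ≥ 0 let V : [s,∞) → B(h) be the continuously differentiable solution of ∂_t V_t = -8 B_t V_t with V_s = 1. Then V_t V_t* ≤ 1 for all t ≥ s; in particular ‖V_t‖_op ≤ 1. -/
/-!
For a fixed vector `ψ`, the derivative of `‖V_t ψ‖²` is `-16 re ⟪B_t V_t ψ, V_t ψ⟫ ≤ 0`, so
`‖V_t ψ‖ ≤ ‖V_s ψ‖ = ‖ψ‖` and `V_t` is a contraction. In the C⋆-algebra `B(h)` this gives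
`V_t V_t* ≤ ‖V_t‖² ≤ 1`.
-/

open ContinuousLinearMap Set Filter
open scoped InnerProductSpace ComplexOrder

noncomputable section

section Dissipative

variable {𝕜 E : Type*} [RCLike 𝕜] [NormedAddCommGroup E] [InnerProductSpace 𝕜 E]
  [NormedSpace ℝ E]

theorem antitoneOn_norm_of_re_inner_deriv_nonpos {D : Set ℝ} (hD : Convex ℝ D) {x x' : ℝ → E}
    (hx : ∀ t ∈ D, HasDerivWithinAt x (x' t) D t)
    (hx' : ∀ t ∈ D, RCLike.re ⟪x' t, x t⟫_𝕜 ≤ 0) :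
    AntitoneOn (‖x ·‖) D := by
  have hsq : ∀ t ∈ D, HasDerivWithinAt (fun t ↦ RCLike.re ⟪x t, x t⟫_𝕜)
      (2 * RCLike.re ⟪x' t, x t⟫_𝕜) D t := fun t ht ↦ by
    refine (RCLike.reCLM.hasFDerivAt.comp_hasDerivWithinAt t
      ((hx t ht).inner 𝕜 (hx t ht))).congr_deriv ?_
    simp [inner_re_symm (x t), two_mul]
  have hanti : AntitoneOn (fun t ↦ RCLike.re ⟪x t, x t⟫_𝕜) D :=
    antitoneOn_of_hasDerivWithinAt_nonpos hD (fun t ht ↦ (hsq t ht).continuousWithinAt)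
      (fun t ht ↦ (hsq t (interior_subset ht)).mono interior_subset)
      fun t ht ↦ mul_nonpos_of_nonneg_of_nonpos zero_le_two (hx' t (interior_subset ht))
  intro a ha b hb hab
  have hsq_le := hanti ha hb hab
  simp only [inner_self_eq_norm_sq] at hsq_le
  exact (pow_le_pow_iff_left₀ (norm_nonneg _) (norm_nonneg _) two_ne_zero).mp hsq_le

theorem antitoneOn_norm_of_hasDerivWithinAt_neg_mul [IsScalarTower ℝ 𝕜 E] {D : Set ℝ}
    (hD : Convex ℝ D) {A V : ℝ → E →L[𝕜] E} (hA : ∀ t ∈ D, (A t).IsPositive)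
    (hV : ∀ t ∈ D, HasDerivWithinAt V (-(A t * V t)) D t) :
    AntitoneOn (‖V ·‖) D := by
  intro a ha b hb hab
  refine opNorm_le_bound _ (norm_nonneg _) fun ψ ↦ ?_
  have hVψ : AntitoneOn (‖V · ψ‖) D := by
    refine antitoneOn_norm_of_re_inner_deriv_nonpos (𝕜 := 𝕜) hD (x' := fun t ↦ -(A t (V t ψ)))
      (fun t ht ↦ ?_) fun t ht ↦ ?_
    · simpa [Function.comp_def] using
        ((apply 𝕜 E ψ).restrictScalars ℝ).hasFDerivAt.comp_hasDerivWithinAt t (hV t ht)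
    · simpa [inner_neg_left] using (hA t ht).re_inner_nonneg_left (V t ψ)
  exact (hVψ ha hb hab).trans (le_opNorm _ _)

end Dissipative

variable {H : Type*} [NormedAddCommGroup H] [InnerProductSpace ℂ H] [CompleteSpace H]

theorem isPositive_one_sub_mul_adjoint_of_norm_le_one {T : H →L[ℂ] H} (hT : ‖T‖ ≤ 1) :
    ((1 : H →L[ℂ] H) - T * adjoint T).IsPositive := by
  rw [← ContinuousLinearMap.le_def]
  calc T * adjoint T ≤ algebraMap ℝ _ (‖T‖ ^ 2) := CStarAlgebra.mul_star_le_algebraMap_norm_sq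
    _ ≤ algebraMap ℝ _ 1 := by gcongr; exact pow_le_one₀ (norm_nonneg T) hT
    _ = 1 := map_one _

theorem contraction_of_positive_generator_general
    (B : ℝ → H →L[ℂ] H)
    (hBpos : ∀ t : ℝ, 0 ≤ t → (B t).IsPositive)
    (s : ℝ) (hs : 0 ≤ s) (V : ℝ → H →L[ℂ] H) (hVs : V s = 1)
    (hV : ∀ t : ℝ, s ≤ t →
      HasDerivWithinAt V ((-8 : ℂ) • (B t * V t)) (Ici s) t) :
    ∀ t : ℝ, s ≤ t →
      ((1 : H →L[ℂ] H) - V t * adjoint (V t)).IsPositive ∧ ‖V t‖ ≤ 1 := by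
  have hA : ∀ t ∈ Ici s, ((8 : ℂ) • B t).IsPositive := fun t ht ↦
    (hBpos t (hs.trans ht)).smul_of_nonneg (by norm_num)
  have hV' : ∀ t ∈ Ici s, HasDerivWithinAt V (-((8 : ℂ) • B t * V t)) (Ici s) t := fun t ht ↦ by
    simpa only [neg_smul, smul_mul_assoc] using hV t ht
  have hanti := antitoneOn_norm_of_hasDerivWithinAt_neg_mul (convex_Ici s) hA hV'
  intro t ht
  have hnorm : ‖V t‖ ≤ 1 := calc
    ‖V t‖ ≤ ‖V s‖ := hanti self_mem_Ici ht ht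
    _ = ‖ContinuousLinearMap.id ℂ H‖ := by rw [hVs]; rfl
    _ ≤ 1 := norm_id_le
  exact ⟨isPositive_one_sub_mul_adjoint_of_norm_le_one hnorm, hnorm⟩

/-- If `B_t ≥ 0` is a continuous family of positive operators and `V` solves
`∂ₜV_t = -8 B_t V_t` with `V_s = 1`, then `V_t V_t* ≤ 1`; in particular `‖V_t‖ ≤ 1`. -/
theorem contraction_of_positive_generator
    (B : ℝ → H →L[ℂ] H) (hBcont : ContinuousOn B (Ici 0))
    (hBpos : ∀ t : ℝ, 0 ≤ t → (B t).IsPositive)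
    (s : ℝ) (hs : 0 ≤ s) (V : ℝ → H →L[ℂ] H) (hVs : V s = 1)
    (hV : ∀ t : ℝ, s ≤ t →
      HasDerivWithinAt V ((-8 : ℂ) • (B t * V t)) (Ici s) t) :
    ∀ t : ℝ, s ≤ t →
      ((1 : H →L[ℂ] H) - V t * adjoint (V t)).IsPositive ∧ ‖V t‖ ≤ 1 :=
  contraction_of_positive_generator_general B hBpos s hs V hVs hV
end
end

section
/- Let Υ₀ ∈ B(h) be self-adjoint, D₀ ∈ B(h) with D₀^⊤ = D₀ or D₀^⊤ = -D₀, and let (Δ, D) be a solution of the elliptic flow with data (Υ₀, D₀). Let μ ∈ ℝ and ε > 0 satisfy Υ₀ ≥ -(μ-ε)·1, and define 𝔅_t := D_t (Υ_t^⊤ + μ·1)^{-1} D_t* and 𝔇_t := Υ_t - μ·1 + 4𝔅_t, where Υ_t := Υ₀ + Δ_t. Then for all t ≥ 0 one has ∂_t 𝔅_t = -2(𝔇_t 𝔅_t + 𝔅_t 𝔇_t) - 4 D_t D_t* and ∂_t 𝔇_t = -8(𝔇_t 𝔅_t + 𝔅_t 𝔇_t), the derivatives being taken in operator norm. -/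
open ContinuousLinearMap Set Filter
open scoped InnerProductSpace

noncomputable section

/-- A conjugation on a complex Hilbert space: an antilinear involution `C` with
`⟪Cf, Cg⟫ = ⟪g, f⟫`. -/
structure Conjugation (H : Type*) [NormedAddCommGroup H] [InnerProductSpace ℂ H] where
  toFun : H → H
  map_add : ∀ x y, toFun (x + y) = toFun x + toFun y
  map_smul : ∀ (a : ℂ) (x : H), toFun (a • x) = (starRingEnd ℂ) a • toFun x
  invol : ∀ x, toFun (toFun x) = x
  inner_conj : ∀ f g : H, (inner ℂ (toFun f) (toFun g) : ℂ) = (inner ℂ g f : ℂ)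

variable {H : Type*} [NormedAddCommGroup H] [InnerProductSpace ℂ H] [CompleteSpace H]

/-- `transp` implements the transpose `X ↦ C X* C` associated with the conjugation `C`. -/
def IsTranspose (C : Conjugation H) (transp : (H →L[ℂ] H) → (H →L[ℂ] H)) : Prop :=
  ∀ (X : H →L[ℂ] H) (x : H), transp X x = C.toFun (adjoint X (C.toFun x))

/-- A (global, continuously differentiable in operator norm) solution `(Δ, D)` of the
elliptic flow `∂ₜΔ_t = 16 D_t D_t*`, `∂ₜD_t = -2(Υ_t D_t + D_t Υ_tᵀ)`, `Υ_t := Υ₀ + Δ_t`,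
with initial data `Δ 0 = 0`, `D 0 = D₀`. -/
def IsEllipticFlow (transp : (H →L[ℂ] H) → (H →L[ℂ] H))
    (Υ₀ D₀ : H →L[ℂ] H) (Δ D : ℝ → H →L[ℂ] H) : Prop :=
  Δ 0 = 0 ∧ D 0 = D₀ ∧
    ∀ t : ℝ, 0 ≤ t →
      HasDerivWithinAt Δ ((16 : ℂ) • (D t * adjoint (D t))) (Ici 0) t ∧
      HasDerivWithinAt D
        ((-2 : ℂ) • ((Υ₀ + Δ t) * D t + D t * transp (Υ₀ + Δ t))) (Ici 0) t

/-- The operator `𝔅_t := D_t (Υ_tᵀ + μ·1)⁻¹ D_t*`, where `Υ_t := Υ₀ + Δ_t`. -/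
def frakB (transp : (H →L[ℂ] H) → (H →L[ℂ] H)) (Υ₀ : H →L[ℂ] H) (μ : ℝ)
    (Δ D : ℝ → H →L[ℂ] H) (t : ℝ) : H →L[ℂ] H :=
  D t * Ring.inverse (transp (Υ₀ + Δ t) + (μ : ℂ) • 1) * adjoint (D t)

/-- The operator `𝔇_t := Υ_t - μ·1 + 4𝔅_t`, where `Υ_t := Υ₀ + Δ_t`. -/
def frakD (transp : (H →L[ℂ] H) → (H →L[ℂ] H)) (Υ₀ : H →L[ℂ] H) (μ : ℝ)
    (Δ D : ℝ → H →L[ℂ] H) (t : ℝ) : H →L[ℂ] H :=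
  (Υ₀ + Δ t) - (μ : ℂ) • 1 + (4 : ℂ) • frakB transp Υ₀ μ Δ D t

/-!
Write `Υ_t = Υ₀ + Δ_t` and `N_t = (Υ_tᵀ + μ)⁻¹`. Since `Δ' = 16 D D* ≥ 0` and `Δ_0 = 0`, `Δ_t` is
positive, so `Υ_t + μ ≥ ε` and its transpose are invertible. If `D₀ᵀ = σ D₀`, then
`D_tᵀ - σ D_t` solves the linear equation `E' = -2(Υ_t E + E Υ_tᵀ)` with `E_0 = 0`, hence vanishes
by Gronwall; for `σ = ±1` this gives `(D D*)ᵀ = D* D`, so `N' = -16 N D* D N`. The product rule for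
`𝔅 = D N D*`, simplified with `Υᵀ N = N Υᵀ = 1 - μ N`, is then the Riccati identity
`𝔅' = -2(𝔇𝔅 + 𝔅𝔇) - 4 D D*`, and `𝔇' = Δ' + 4𝔅'`.
-/

section RightDerivatives

variable {E : Type*} [NormedAddCommGroup E] [NormedSpace ℝ E] {f g f' : ℝ → E}

theorem continuousOn_Icc_of_hasDerivWithinAt_Ici
    (hf : ∀ t, 0 ≤ t → HasDerivWithinAt f (f' t) (Ici 0) t) (b : ℝ) :
    ContinuousOn f (Icc 0 b) :=
  fun t ht => (hf t ht.1).continuousWithinAt.mono Icc_subset_Ici_self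

theorem hasDerivWithinAt_Ici_self_of_hasDerivWithinAt_Ici
    (hf : ∀ t, 0 ≤ t → HasDerivWithinAt f (f' t) (Ici 0) t) (b : ℝ) :
    ∀ t ∈ Ico 0 b, HasDerivWithinAt f (f' t) (Ici t) t :=
  fun t ht => (hf t ht.1).mono (Ici_subset_Ici.2 ht.1)

theorem eq_of_hasDerivWithinAt_Ici_eq
    (hf : ∀ t, 0 ≤ t → HasDerivWithinAt f (f' t) (Ici 0) t)
    (hg : ∀ t, 0 ≤ t → HasDerivWithinAt g (f' t) (Ici 0) t) (h0 : f 0 = g 0) :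
    ∀ t, 0 ≤ t → f t = g t := fun b hb =>
  eq_of_has_deriv_right_eq (hasDerivWithinAt_Ici_self_of_hasDerivWithinAt_Ici hf b)
    (hasDerivWithinAt_Ici_self_of_hasDerivWithinAt_Ici hg b)
    (continuousOn_Icc_of_hasDerivWithinAt_Ici hf b)
    (continuousOn_Icc_of_hasDerivWithinAt_Ici hg b) h0 b ⟨hb, le_rfl⟩

theorem eq_zero_of_hasDerivWithinAt_Ici_of_norm_le
    (hf : ∀ t, 0 ≤ t → HasDerivWithinAt f (f' t) (Ici 0) t) (h0 : f 0 = 0)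
    (hbound : ∀ b, ∃ K, ∀ t ∈ Icc 0 b, ‖f' t‖ ≤ K * ‖f t‖) :
    ∀ t, 0 ≤ t → f t = 0 := by
  intro b hb
  obtain ⟨K, hK⟩ := hbound b
  have hgronwall := norm_le_gronwallBound_of_norm_deriv_right_le (δ := 0) (ε := 0)
    (continuousOn_Icc_of_hasDerivWithinAt_Ici hf b)
    (hasDerivWithinAt_Ici_self_of_hasDerivWithinAt_Ici hf b) (by simp [h0])
    (fun t ht => (hK t (Ico_subset_Icc_self ht)).trans (add_zero _).ge) b ⟨hb, le_rfl⟩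
  rwa [gronwallBound_ε0_δ0, norm_le_zero_iff] at hgronwall

theorem monotoneOn_Ici_of_hasDerivWithinAt_nonneg {f f' : ℝ → ℝ}
    (hf : ∀ t, 0 ≤ t → HasDerivWithinAt f (f' t) (Ici 0) t) (hf' : ∀ t, 0 ≤ t → 0 ≤ f' t) :
    MonotoneOn f (Ici 0) := by
  refine monotoneOn_of_hasDerivWithinAt_nonneg (f' := f') (convex_Ici 0)
    (fun t ht => (hf t ht).continuousWithinAt) (fun t ht => ?_) (fun t ht => ?_)
  · rw [interior_Ici] at ht ⊢
    exact (hf t (le_of_lt ht)).mono Ioi_subset_Ici_self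
  · exact hf' t (interior_subset ht)

end RightDerivatives

theorem HasDerivWithinAt.ringInverse {A : Type*} [NormedRing A] [NormedAlgebra ℝ A]
    [CompleteSpace A] {M : ℝ → A} {M' : A} {s : Set ℝ} {t : ℝ}
    (hM : HasDerivWithinAt M M' s t) (hu : IsUnit (M t)) :
    HasDerivWithinAt (fun u => Ring.inverse (M u))
      (-(Ring.inverse (M t) * M' * Ring.inverse (M t))) s t := by
  obtain ⟨u, hu⟩ := hu
  have hinv : HasFDerivAt Ring.inverse (-mulLeftRight ℝ A ↑u⁻¹ ↑u⁻¹) (M t) :=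
    hu ▸ hasFDerivAt_ringInverse u
  have h := hinv.comp_hasDerivWithinAt t hM
  simpa [Function.comp_def, ← hu, mulLeftRight_apply] using h

theorem norm_mul_add_mul_le {A : Type*} [NormedRing A] (X Y Z : A) :
    ‖X * Z + Z * Y‖ ≤ (‖X‖ + ‖Y‖) * ‖Z‖ :=
  calc ‖X * Z + Z * Y‖ ≤ ‖X‖ * ‖Z‖ + ‖Z‖ * ‖Y‖ :=
        (norm_add_le _ _).trans (add_le_add (norm_mul_le _ _) (norm_mul_le _ _))
    _ = (‖X‖ + ‖Y‖) * ‖Z‖ := by ring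

theorem isUnit_add_smul_one_of_isPositive {A : H →L[ℂ] H} {μ ε : ℝ} (hε : 0 < ε)
    (hA : (A + ((μ - ε : ℝ) : ℂ) • (1 : H →L[ℂ] H)).IsPositive) :
    IsUnit (A + (μ : ℂ) • 1) := by
  have hle : algebraMap ℝ (H →L[ℂ] H) ε ≤ A + (μ : ℂ) • 1 := by
    rw [ContinuousLinearMap.le_def, Algebra.algebraMap_eq_smul_one,
      RCLike.real_smul_eq_coe_smul (K := ℂ)]
    convert hA using 1
    push_cast
    rw [sub_smul]
    abel
  exact CStarAlgebra.isUnit_of_le _ hle (isStrictlyPositive_algebraMap hε)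

namespace Conjugation

omit [CompleteSpace H]

theorem norm_apply (C : Conjugation H) (x : H) : ‖C.toFun x‖ = ‖x‖ := by
  have h := congrArg Complex.re (C.inner_conj x x)
  rw [inner_self_eq_norm_sq_to_K, inner_self_eq_norm_sq_to_K] at h
  have hsq : ‖C.toFun x‖ ^ 2 = ‖x‖ ^ 2 := by exact_mod_cast h
  exact (sq_eq_sq₀ (norm_nonneg _) (norm_nonneg _)).mp hsq

theorem inner_apply_right_comm (C : Conjugation H) (x y : H) :
    ⟪x, C.toFun y⟫_ℂ = ⟪y, C.toFun x⟫_ℂ := by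
  conv_lhs => rw [← C.invol x]
  rw [C.inner_conj]

end Conjugation

namespace IsTranspose

variable {C : Conjugation H} {transp : (H →L[ℂ] H) → (H →L[ℂ] H)}

theorem map_add (ht : IsTranspose C transp) (X Y : H →L[ℂ] H) :
    transp (X + Y) = transp X + transp Y := by
  ext x
  rw [add_apply, ht, ht, ht, _root_.map_add, add_apply, C.map_add]

theorem map_smul (ht : IsTranspose C transp) (a : ℂ) (X : H →L[ℂ] H) :
    transp (a • X) = a • transp X := by
  ext x
  rw [smul_apply, ht, ht, map_smulₛₗ adjoint, smul_apply, C.map_smul]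
  simp

theorem map_mul (ht : IsTranspose C transp) (X Y : H →L[ℂ] H) :
    transp (X * Y) = transp Y * transp X := by
  ext x
  rw [mul_apply_eq_comp, ht, ht, ht, mul_def, adjoint_comp, comp_apply, C.invol]

theorem map_one (ht : IsTranspose C transp) : transp (1 : H →L[ℂ] H) = 1 := by
  ext x
  rw [ht, one_def, adjoint_id, id_apply, C.invol, id_apply]

theorem map_adjoint (ht : IsTranspose C transp) (X : H →L[ℂ] H) :
    transp (adjoint X) = adjoint (transp X) := by
  symm
  ext x
  refine ext_inner_left ℂ fun y => ?_
  rw [adjoint_inner_right, ht X, ht (adjoint X), adjoint_adjoint,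
    C.inner_apply_right_comm y]
  conv_lhs => rw [← C.invol x]
  rw [C.inner_conj, adjoint_inner_right]

theorem transp_transp (ht : IsTranspose C transp) (X : H →L[ℂ] H) :
    transp (transp X) = X := by
  ext x
  rw [ht, ← ht.map_adjoint, ht, adjoint_adjoint, C.invol, C.invol]

theorem isUnit (ht : IsTranspose C transp) {X : H →L[ℂ] H} (hX : IsUnit X) :
    IsUnit (transp X) := by
  obtain ⟨u, rfl⟩ := hX
  exact ⟨⟨transp ↑u, transp ↑u⁻¹,
    by rw [← ht.map_mul, u.inv_mul, ht.map_one],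
    by rw [← ht.map_mul, u.mul_inv, ht.map_one]⟩, rfl⟩

theorem norm_le (ht : IsTranspose C transp) (X : H →L[ℂ] H) : ‖transp X‖ ≤ ‖X‖ := by
  refine opNorm_le_bound _ (norm_nonneg X) fun x => ?_
  rw [ht X x, C.norm_apply]
  calc ‖adjoint X (C.toFun x)‖ ≤ ‖adjoint X‖ * ‖C.toFun x‖ := le_opNorm _ _
    _ = ‖X‖ * ‖x‖ := by rw [C.norm_apply, adjoint.norm_map]

def toCLM (ht : IsTranspose C transp) : (H →L[ℂ] H) →L[ℂ] (H →L[ℂ] H) :=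
  LinearMap.mkContinuous ⟨⟨transp, ht.map_add⟩, ht.map_smul⟩ 1
    fun X => by simpa using ht.norm_le X

theorem hasDerivWithinAt (ht : IsTranspose C transp) {f : ℝ → H →L[ℂ] H} {f' : H →L[ℂ] H}
    {s : Set ℝ} {t : ℝ} (hf : HasDerivWithinAt f f' s t) :
    HasDerivWithinAt (fun u => transp (f u)) (transp f') s t :=
  (ht.toCLM.restrictScalars ℝ).hasFDerivAt.comp_hasDerivWithinAt t hf

end IsTranspose

/-- The product rule for `d N e` when `N = (T + μ)⁻¹`, `d' = -2(Yd + dT)`,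
`N' = -N (16 e d) N` and `e' = -2(eY + Te)`. -/
theorem riccati_identity {R A : Type*} [CommRing R] [Ring A] [Algebra R A] {μ : R}
    {Y T N d e : A} (hN : (T + μ • 1) * N = 1) (hN' : N * (T + μ • 1) = 1) :
    ((-2 : R) • (Y * d + d * T) * N + d * -(N * ((16 : R) • (e * d)) * N)) * e
        + d * N * ((-2 : R) • (e * Y + T * e))
      = (-2 : R) • ((Y - μ • 1 + (4 : R) • (d * N * e)) * (d * N * e)
          + (d * N * e) * (Y - μ • 1 + (4 : R) • (d * N * e)))
        - (4 : R) • (d * e) := by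
  have hTN : T * (N * e) = e - μ • (N * e) := by
    rw [← mul_assoc, eq_sub_iff_add_eq, ← smul_mul_assoc, ← add_mul, ← smul_one_mul,
      ← add_mul, hN, one_mul]
  have hNT : N * (T * e) = e - μ • (N * e) := by
    rw [← mul_assoc, eq_sub_iff_add_eq, ← smul_mul_assoc, ← add_mul, ← mul_smul_one,
      ← mul_add, hN', one_mul]
  simp only [smul_add, smul_sub, sub_mul, mul_sub, add_mul, mul_add, neg_mul, mul_neg,
    smul_mul_assoc, mul_smul_comm, smul_smul, mul_one, one_mul, mul_assoc, hTN, hNT]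
  module

namespace IsEllipticFlow

variable {C : Conjugation H} {transp : (H →L[ℂ] H) → (H →L[ℂ] H)} {Υ₀ D₀ : H →L[ℂ] H}
  {Δ D : ℝ → H →L[ℂ] H}

theorem hasDerivWithinAt_Δ (hflow : IsEllipticFlow transp Υ₀ D₀ Δ D) :
    ∀ t, 0 ≤ t → HasDerivWithinAt Δ ((16 : ℂ) • (D t * adjoint (D t))) (Ici 0) t :=
  fun t ht => (hflow.2.2 t ht).1

theorem hasDerivWithinAt_D (hflow : IsEllipticFlow transp Υ₀ D₀ Δ D) :
    ∀ t, 0 ≤ t → HasDerivWithinAt D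
      ((-2 : ℂ) • ((Υ₀ + Δ t) * D t + D t * transp (Υ₀ + Δ t))) (Ici 0) t :=
  fun t ht => (hflow.2.2 t ht).2

theorem isSelfAdjoint_Δ (hflow : IsEllipticFlow transp Υ₀ D₀ Δ D) :
    ∀ t, 0 ≤ t → IsSelfAdjoint (Δ t) := by
  have hstar : ∀ t, 0 ≤ t →
      HasDerivWithinAt (fun s => star (Δ s)) ((16 : ℂ) • (D t * adjoint (D t))) (Ici 0) t := by
    intro t ht
    refine (hflow.hasDerivWithinAt_Δ t ht).star.congr_deriv ?_
    rw [star_smul, star_mul, star_eq_adjoint, star_eq_adjoint, adjoint_adjoint]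
    simp
  exact eq_of_hasDerivWithinAt_Ici_eq hstar hflow.hasDerivWithinAt_Δ (by simp [hflow.1])

open scoped ComplexOrder in
theorem isPositive_Δ (hflow : IsEllipticFlow transp Υ₀ D₀ Δ D) (t : ℝ) (ht : 0 ≤ t) :
    (Δ t).IsPositive := by
  refine ⟨isSelfAdjoint_iff_isSymmetric.mp (hflow.isSelfAdjoint_Δ t ht), fun φ => ?_⟩
  let q : (H →L[ℂ] H) →L[ℝ] ℝ :=
    Complex.reCLM.comp (((innerSL ℂ φ).comp (apply ℂ H φ)).restrictScalars ℝ)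
  have hq : ∀ X : H →L[ℂ] H, q X = X.reApplyInnerSelf φ := fun X => by
    simp [q, reApplyInnerSelf_apply, inner_re_symm]
  have hderiv_nonneg : ∀ s, 0 ≤ s → 0 ≤ q ((16 : ℂ) • (D s * adjoint (D s))) := by
    intro s _
    have hpos : (0 : H →L[ℂ] H) ≤ (16 : ℂ) • (D s * adjoint (D s)) := by
      rw [← star_eq_adjoint]
      exact smul_nonneg (by norm_num) (mul_star_self_nonneg (D s))
    rw [hq]
    exact ((nonneg_iff_isPositive _).mp hpos).2 φ
  have hmono : MonotoneOn (fun s => q (Δ s)) (Ici 0) :=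
    monotoneOn_Ici_of_hasDerivWithinAt_nonneg
      (fun s hs => q.hasFDerivAt.comp_hasDerivWithinAt s (hflow.hasDerivWithinAt_Δ s hs))
      hderiv_nonneg
  have hq0 : q (Δ 0) = 0 := by rw [hflow.1, map_zero]
  rw [← hq, ← hq0]
  exact hmono self_mem_Ici ht ht

theorem isUnit_transp_add_smul_one (hflow : IsEllipticFlow transp Υ₀ D₀ Δ D)
    (htransp : IsTranspose C transp) {μ ε : ℝ} (hε : 0 < ε)
    (hbound : (Υ₀ + ((μ - ε : ℝ) : ℂ) • (1 : H →L[ℂ] H)).IsPositive) (t : ℝ) (ht : 0 ≤ t) :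
    IsUnit (transp (Υ₀ + Δ t) + (μ : ℂ) • 1) := by
  have hunit : IsUnit (Υ₀ + Δ t + (μ : ℂ) • 1) := isUnit_add_smul_one_of_isPositive hε
    (by rw [add_right_comm]; exact hbound.add (hflow.isPositive_Δ t ht))
  have h := htransp.isUnit hunit
  rwa [htransp.map_add _ ((μ : ℂ) • 1), htransp.map_smul, htransp.map_one] at h

theorem transp_D (hflow : IsEllipticFlow transp Υ₀ D₀ Δ D) (htransp : IsTranspose C transp)
    {σ : ℂ} (hσ : transp D₀ = σ • D₀) : ∀ t, 0 ≤ t → transp (D t) = σ • D t := by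
  let Υ : ℝ → H →L[ℂ] H := fun s => Υ₀ + Δ s
  let E : ℝ → H →L[ℂ] H := fun s => transp (D s) - σ • D s
  have hderiv : ∀ t, 0 ≤ t → HasDerivWithinAt E
      ((-2 : ℂ) • (Υ t * E t + E t * transp (Υ t))) (Ici 0) t := by
    intro t ht
    have hD := hflow.hasDerivWithinAt_D t ht
    refine ((htransp.hasDerivWithinAt hD).sub (hD.const_smul σ)).congr_deriv ?_
    simp only [E, Υ, htransp.map_smul, htransp.map_add, htransp.map_mul, htransp.transp_transp,
      smul_add, smul_sub, mul_sub, sub_mul, mul_smul_comm, smul_mul_assoc, smul_smul]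
    module
  have hbound : ∀ b, ∃ K, ∀ t ∈ Icc 0 b,
      ‖(-2 : ℂ) • (Υ t * E t + E t * transp (Υ t))‖ ≤ K * ‖E t‖ := by
    intro b
    obtain ⟨K, hK⟩ := isCompact_Icc.exists_bound_of_continuousOn (continuousOn_const.add
      (continuousOn_Icc_of_hasDerivWithinAt_Ici hflow.hasDerivWithinAt_Δ b))
    refine ⟨2 * (K + K), fun t ht => ?_⟩
    have hΥ : ‖Υ t‖ ≤ K := hK t ht
    calc ‖(-2 : ℂ) • (Υ t * E t + E t * transp (Υ t))‖
        = 2 * ‖Υ t * E t + E t * transp (Υ t)‖ := by rw [norm_smul]; norm_num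
      _ ≤ 2 * ((‖Υ t‖ + ‖transp (Υ t)‖) * ‖E t‖) := by gcongr; exact norm_mul_add_mul_le _ _ _
      _ ≤ 2 * ((K + K) * ‖E t‖) := by gcongr; exact (htransp.norm_le _).trans hΥ
      _ = 2 * (K + K) * ‖E t‖ := by ring
  intro t ht
  exact sub_eq_zero.mp (eq_zero_of_hasDerivWithinAt_Ici_of_norm_le hderiv
    (by simp [E, hflow.2.1, hσ]) hbound t ht)

theorem transp_D_mul_adjoint (hflow : IsEllipticFlow transp Υ₀ D₀ Δ D)
    (htransp : IsTranspose C transp) {σ : ℂ} (hσ : transp D₀ = σ • D₀) (hσ1 : star σ * σ = 1)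
    (t : ℝ) (ht : 0 ≤ t) : transp (D t * adjoint (D t)) = adjoint (D t) * D t := by
  rw [htransp.map_mul, htransp.map_adjoint, hflow.transp_D htransp hσ t ht,
    map_smulₛₗ adjoint, smul_mul_smul, starRingEnd_apply, hσ1, one_smul]

theorem hasDerivWithinAt_frakB (hflow : IsEllipticFlow transp Υ₀ D₀ Δ D)
    (htransp : IsTranspose C transp) {μ t : ℝ} (ht : 0 ≤ t) (hΥ : IsSelfAdjoint (Υ₀ + Δ t))
    (hunit : IsUnit (transp (Υ₀ + Δ t) + (μ : ℂ) • 1))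
    (hsym : transp (D t * adjoint (D t)) = adjoint (D t) * D t) :
    HasDerivWithinAt (frakB transp Υ₀ μ Δ D)
      ((-2 : ℂ) • (frakD transp Υ₀ μ Δ D t * frakB transp Υ₀ μ Δ D t
          + frakB transp Υ₀ μ Δ D t * frakD transp Υ₀ μ Δ D t)
        - (4 : ℂ) • (D t * adjoint (D t))) (Ici 0) t := by
  have hD := hflow.hasDerivWithinAt_D t ht
  have hDadj : HasDerivWithinAt (fun s => adjoint (D s))
      ((-2 : ℂ) • (adjoint (D t) * (Υ₀ + Δ t) + transp (Υ₀ + Δ t) * adjoint (D t)))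
      (Ici 0) t := by
    simp only [← star_eq_adjoint]
    refine hD.star.congr_deriv ?_
    rw [star_smul, star_add, star_mul, star_mul, hΥ.star_eq, star_eq_adjoint (transp _),
      ← htransp.map_adjoint, ← star_eq_adjoint, hΥ.star_eq, add_comm]
    simp
  have hinv : HasDerivWithinAt (fun s => Ring.inverse (transp (Υ₀ + Δ s) + (μ : ℂ) • 1))
      (-(Ring.inverse (transp (Υ₀ + Δ t) + (μ : ℂ) • 1) * ((16 : ℂ) • (adjoint (D t) * D t))
        * Ring.inverse (transp (Υ₀ + Δ t) + (μ : ℂ) • 1))) (Ici 0) t := by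
    have hM := (htransp.hasDerivWithinAt
      ((hflow.hasDerivWithinAt_Δ t ht).const_add Υ₀)).add_const ((μ : ℂ) • (1 : H →L[ℂ] H))
    rw [htransp.map_smul, hsym] at hM
    exact hM.ringInverse hunit
  refine ((hD.mul hinv).mul hDadj).congr_deriv ?_
  exact riccati_identity (Ring.mul_inverse_cancel _ hunit) (Ring.inverse_mul_cancel _ hunit)

theorem hasDerivWithinAt_frakD (hflow : IsEllipticFlow transp Υ₀ D₀ Δ D) {μ t : ℝ}
    (ht : 0 ≤ t) {S : H →L[ℂ] H}
    (hB : HasDerivWithinAt (frakB transp Υ₀ μ Δ D)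
      ((-2 : ℂ) • S - (4 : ℂ) • (D t * adjoint (D t))) (Ici 0) t) :
    HasDerivWithinAt (frakD transp Υ₀ μ Δ D) ((-8 : ℂ) • S) (Ici 0) t := by
  refine ((((hflow.hasDerivWithinAt_Δ t ht).const_add Υ₀).sub_const ((μ : ℂ) • 1)).add
    (hB.const_smul (4 : ℂ))).congr_deriv ?_
  module

end IsEllipticFlow

/-- Differentiability of `𝔅` and `𝔇` along the elliptic flow:
`∂ₜ𝔅_t = -2(𝔇_t𝔅_t + 𝔅_t𝔇_t) - 4 D_t D_t*` and `∂ₜ𝔇_t = -8(𝔇_t𝔅_t + 𝔅_t𝔇_t)`. -/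
theorem frakB_frakD_derivatives
    (Υ₀ D₀ : H →L[ℂ] H) (hΥ₀ : IsSelfAdjoint Υ₀)
    (C : Conjugation H) (transp : (H →L[ℂ] H) → (H →L[ℂ] H))
    (htransp : IsTranspose C transp)
    (hD₀sym : transp D₀ = D₀ ∨ transp D₀ = -D₀)
    (μ ε : ℝ) (hε : 0 < ε)
    (hbound : (Υ₀ + ((μ - ε : ℝ) : ℂ) • (1 : H →L[ℂ] H)).IsPositive)
    (Δ D : ℝ → H →L[ℂ] H) (hflow : IsEllipticFlow transp Υ₀ D₀ Δ D) :
    ∀ t : ℝ, 0 ≤ t →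
      HasDerivWithinAt (frakB transp Υ₀ μ Δ D)
        ((-2 : ℂ) • (frakD transp Υ₀ μ Δ D t * frakB transp Υ₀ μ Δ D t
            + frakB transp Υ₀ μ Δ D t * frakD transp Υ₀ μ Δ D t)
          - (4 : ℂ) • (D t * adjoint (D t))) (Ici 0) t ∧
      HasDerivWithinAt (frakD transp Υ₀ μ Δ D)
        ((-8 : ℂ) • (frakD transp Υ₀ μ Δ D t * frakB transp Υ₀ μ Δ D t
            + frakB transp Υ₀ μ Δ D t * frakD transp Υ₀ μ Δ D t)) (Ici 0) t := by
  intro t ht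
  obtain ⟨σ, hσ, hσ1⟩ : ∃ σ : ℂ, transp D₀ = σ • D₀ ∧ star σ * σ = 1 := by
    rcases hD₀sym with h | h
    · exact ⟨1, by simpa using h, by simp⟩
    · exact ⟨-1, by simpa using h, by simp⟩
  have hB := hflow.hasDerivWithinAt_frakB htransp ht (hΥ₀.add (hflow.isSelfAdjoint_Δ t ht))
    (hflow.isUnit_transp_add_smul_one htransp hε hbound t ht)
    (hflow.transp_D_mul_adjoint htransp hσ hσ1 t ht)
  exact ⟨hB, hflow.hasDerivWithinAt_frakD ht hB⟩
end
end

section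
/- Let Υ₀ ∈ B(h) be self-adjoint, D₀ ∈ B(h), and let (Δ, D) be a solution of the elliptic flow with data (Υ₀, D₀); set Υ_t := Υ₀ + Δ_t and K_t := Υ_t D_t - D_t Υ_t^⊤. Then for all 0 ≤ s ≤ t, Υ_t² + 4 D_t D_t* = Υ_s² + 4 D_s D_s* + 8 ∫_s^t (K_τ D_τ* + D_τ K_τ*) dτ, where the integral is the Bochner integral in B(h). -/
/-!
`Δ` stays self-adjoint because its derivative `16 D D*` is, so `Υ_t` is self-adjoint; with this,
differentiating `Υ² + 4 D D*` along the flow gives exactly `8 (K D* + D K*)`, the terms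
`D Υᵀ D*` from `D' D*` and `D D'*` being matched by those of `K D*` and `D K*`. The transpose is
an isometry, so this derivative is continuous and the fundamental theorem of calculus applies.
-/

open ContinuousLinearMap Set Filter
open scoped InnerProductSpace

noncomputable section

variable {H : Type*} [NormedAddCommGroup H] [InnerProductSpace ℂ H] [CompleteSpace H]

theorem IsSelfAdjoint.of_hasDerivWithinAt_Ici {A : Type*} [NormedAddCommGroup A]
    [NormedSpace ℝ A] [StarAddMonoid A] [StarModule ℝ A] [ContinuousStar A]
    {f f' : ℝ → A} {a t : ℝ} (hfa : IsSelfAdjoint (f a))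
    (hf : ∀ τ ∈ Ici a, HasDerivWithinAt f (f' τ) (Ici a) τ)
    (hf' : ∀ τ ∈ Ici a, IsSelfAdjoint (f' τ)) (hat : a ≤ t) : IsSelfAdjoint (f t) := by
  have hderiv : ∀ τ ∈ Ico a t, HasDerivWithinAt f (f' τ) (Ici τ) τ := fun τ hτ =>
    (hf τ hτ.1).mono (Ici_subset_Ici.2 hτ.1)
  have hderiv_star : ∀ τ ∈ Ico a t, HasDerivWithinAt (fun σ => star (f σ)) (f' τ) (Ici τ) τ :=
    fun τ hτ => (hf' τ hτ.1).star_eq ▸ (hderiv τ hτ).star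
  have hcont : ContinuousOn f (Icc a t) := fun τ hτ =>
    (hf τ hτ.1).continuousWithinAt.mono Icc_subset_Ici_self
  exact (eq_of_has_deriv_right_eq hderiv_star hderiv (continuous_star.comp_continuousOn hcont)
    hcont hfa.star_eq t ⟨hat, le_rfl⟩)

theorem eq_add_integral_of_hasDerivWithinAt_Ici {E : Type*} [NormedAddCommGroup E]
    [NormedSpace ℝ E] [CompleteSpace E] {F F' : ℝ → E} {s t : ℝ} (hst : s ≤ t)
    (hF : ∀ τ ∈ Icc s t, HasDerivWithinAt F (F' τ) (Ici s) τ)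
    (hF' : ContinuousOn F' (Icc s t)) : F t = F s + ∫ τ in s..t, F' τ := by
  have hcont : ContinuousOn F (Icc s t) := fun τ hτ =>
    (hF τ hτ).continuousWithinAt.mono Icc_subset_Ici_self
  have hderiv : ∀ τ ∈ Ioo s t, HasDerivWithinAt F (F' τ) (Ioi τ) τ := fun τ hτ =>
    (hF τ (Ioo_subset_Icc_self hτ)).mono fun σ hσ => hτ.1.le.trans hσ.le
  rw [intervalIntegral.integral_eq_sub_of_hasDeriv_right_of_le hst hcont hderiv
    (hF'.intervalIntegrable_of_Icc hst), add_sub_cancel]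

theorem eight_smul_mul_star_add_eq {A : Type*} [Ring A] [StarRing A] [Algebra ℂ A]
    [StarModule ℂ A] {Υ D T : A} (hΥ : IsSelfAdjoint Υ) :
    (16 : ℂ) • (D * star D) * Υ + Υ * ((16 : ℂ) • (D * star D))
        + (4 : ℂ) • ((-2 : ℂ) • (Υ * D + D * T) * star D
          + D * star ((-2 : ℂ) • (Υ * D + D * T)))
      = (8 : ℂ) • ((Υ * D - D * T) * star D + D * star (Υ * D - D * T)) := by
  have h2 : star (-2 : ℂ) = -2 := by norm_num [Complex.ext_iff]
  simp only [star_smul, star_add, star_sub, star_mul, hΥ.star_eq, h2, smul_mul_assoc,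
    mul_smul_comm, add_mul, mul_add, sub_mul, mul_sub, mul_assoc]
  module

theorem Conjugation.norm_map {E : Type*} [NormedAddCommGroup E] [InnerProductSpace ℂ E]
    (C : Conjugation E) (x : E) : ‖C.toFun x‖ = ‖x‖ := by
  rw [norm_eq_sqrt_re_inner (𝕜 := ℂ), norm_eq_sqrt_re_inner (𝕜 := ℂ) x, C.inner_conj]

theorem Conjugation.map_sub {E : Type*} [NormedAddCommGroup E] [InnerProductSpace ℂ E]
    (C : Conjugation E) (x y : E) :
    C.toFun (x - y) = C.toFun x - C.toFun y := by
  have hneg : C.toFun (-y) = -C.toFun y := by simpa using C.map_smul (-1) y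
  rw [sub_eq_add_neg, C.map_add, hneg, sub_eq_add_neg]

theorem IsTranspose.lipschitzWith {C : Conjugation H} {transp : (H →L[ℂ] H) → (H →L[ℂ] H)}
    (ht : IsTranspose C transp) : LipschitzWith 1 transp := by
  refine LipschitzWith.of_dist_le_mul fun X Y => ?_
  rw [NNReal.coe_one, one_mul, dist_eq_norm, dist_eq_norm]
  refine opNorm_le_bound _ (norm_nonneg _) fun x => ?_
  calc ‖(transp X - transp Y) x‖
      = ‖adjoint (X - Y) (C.toFun x)‖ := by
        rw [sub_apply, ht, ht, ← C.map_sub, C.norm_map, map_sub, sub_apply]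
    _ ≤ ‖X - Y‖ * ‖x‖ := by
        simpa only [LinearIsometryEquiv.norm_map, C.norm_map] using
          le_opNorm (adjoint (X - Y)) (C.toFun x)

/-- The paper's `K_t = Υ_t D_t - D_t Υ_tᵀ`. -/
def transpCommutator (transp : (H →L[ℂ] H) → (H →L[ℂ] H)) (Υ D : H →L[ℂ] H) : H →L[ℂ] H :=
  Υ * D - D * transp Υ

namespace IsEllipticFlow

variable {transp : (H →L[ℂ] H) → (H →L[ℂ] H)} {Υ₀ D₀ : H →L[ℂ] H} {Δ D : ℝ → H →L[ℂ] H}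

theorem isSelfAdjoint_delta (hflow : IsEllipticFlow transp Υ₀ D₀ Δ D) {t : ℝ} (ht : 0 ≤ t) :
    IsSelfAdjoint (Δ t) := by
  obtain ⟨hΔ0, -, hderiv⟩ := hflow
  have h0 : IsSelfAdjoint (Δ 0) := by rw [hΔ0]; exact .zero _
  refine IsSelfAdjoint.of_hasDerivWithinAt_Ici (f' := fun τ => (16 : ℂ) • (D τ * adjoint (D τ)))
    h0 (fun τ hτ => (hderiv τ hτ).1) (fun τ _ => ?_) ht
  rw [← star_eq_adjoint]
  exact (IsSelfAdjoint.ofNat 16).smul (IsSelfAdjoint.mul_star_self _)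

theorem hasDerivWithinAt_sq_add_four_smul_mul_adjoint
    (hflow : IsEllipticFlow transp Υ₀ D₀ Δ D) (hΥ₀ : IsSelfAdjoint Υ₀) {t : ℝ} (ht : 0 ≤ t) :
    HasDerivWithinAt (fun τ => (Υ₀ + Δ τ) ^ 2 + (4 : ℂ) • (D τ * adjoint (D τ)))
      ((8 : ℂ) • (transpCommutator transp (Υ₀ + Δ t) (D t) * adjoint (D t)
        + D t * adjoint (transpCommutator transp (Υ₀ + Δ t) (D t)))) (Ici 0) t := by
  obtain ⟨hΔ, hD⟩ := hflow.2.2 t ht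
  simp only [← star_eq_adjoint] at hΔ hD ⊢
  have hΥ := hΔ.const_add Υ₀
  have hsq := hΥ.mul hΥ
  simp only [← sq] at hsq
  refine (hsq.add ((hD.mul hD.star).const_smul (4 : ℂ))).congr_deriv ?_
  exact eight_smul_mul_star_add_eq (hΥ₀.add (hflow.isSelfAdjoint_delta ht))

theorem continuousOn_transpCommutator (hflow : IsEllipticFlow transp Υ₀ D₀ Δ D)
    {C : Conjugation H} (htransp : IsTranspose C transp) :
    ContinuousOn (fun τ => transpCommutator transp (Υ₀ + Δ τ) (D τ)) (Ici 0) := by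
  have hΔ : ContinuousOn Δ (Ici 0) := fun τ hτ => (hflow.2.2 τ hτ).1.continuousWithinAt
  have hD : ContinuousOn D (Ici 0) := fun τ hτ => (hflow.2.2 τ hτ).2.continuousWithinAt
  have hΥ := hΔ.const_add Υ₀
  exact (hΥ.mul hD).sub (hD.mul (htransp.lipschitzWith.continuous.comp_continuousOn hΥ))

end IsEllipticFlow

/-- Towards a constant of motion: with `K_t := Υ_t D_t - D_t Υ_tᵀ`, along the elliptic flow
`Υ_t² + 4D_tD_t* = Υ_s² + 4D_sD_s* + 8∫_s^t (K_τ D_τ* + D_τ K_τ*) dτ`. -/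
theorem constant_of_motion_integral_formula
    (Υ₀ D₀ : H →L[ℂ] H) (hΥ₀ : IsSelfAdjoint Υ₀)
    (C : Conjugation H) (transp : (H →L[ℂ] H) → (H →L[ℂ] H))
    (htransp : IsTranspose C transp)
    (Δ D : ℝ → H →L[ℂ] H) (hflow : IsEllipticFlow transp Υ₀ D₀ Δ D) :
    ∀ s t : ℝ, 0 ≤ s → s ≤ t →
      (Υ₀ + Δ t) ^ 2 + (4 : ℂ) • (D t * adjoint (D t))
        = (Υ₀ + Δ s) ^ 2 + (4 : ℂ) • (D s * adjoint (D s))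
          + (8 : ℂ) • ∫ τ in s..t,
              (((Υ₀ + Δ τ) * D τ - D τ * transp (Υ₀ + Δ τ)) * adjoint (D τ)
                + D τ * adjoint ((Υ₀ + Δ τ) * D τ - D τ * transp (Υ₀ + Δ τ))) := by
  intro s t hs hst
  have hsub : Icc s t ⊆ Ici 0 := fun τ hτ => hs.trans hτ.1
  have hK := (hflow.continuousOn_transpCommutator htransp).mono hsub
  have hD : ContinuousOn D (Icc s t) := fun τ hτ =>
    (hflow.2.2 τ (hsub hτ)).2.continuousWithinAt.mono hsub
  have hintegrand : ContinuousOn (fun τ => (8 : ℂ) • (transpCommutator transp (Υ₀ + Δ τ) (D τ)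
      * adjoint (D τ) + D τ * adjoint (transpCommutator transp (Υ₀ + Δ τ) (D τ)))) (Icc s t) := by
    fun_prop
  rw [eq_add_integral_of_hasDerivWithinAt_Ici hst (fun τ hτ =>
    (hflow.hasDerivWithinAt_sq_add_four_smul_mul_adjoint hΥ₀ (hsub hτ)).mono
      (Ici_subset_Ici.2 hs)) hintegrand, intervalIntegral.integral_smul]
  rfl
end
end
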